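/- arXiv:math/0605181 — 2 statements merged into one kernel-verified Lean document; each statement's English description precedes it below -/
import Mathlib

section
/- For any concave Young-function Φ with density function φ, there exist constants C_Φ > 0 and B_Φ ≥ 0 such that A_Φ(∞) − B_Φ ≤ ∫₀^∞ Φ(t)/(t+1)² dt ≤ C_Φ + A_Φ(∞), where A_Φ(∞) := ∫₁^∞ φ(t)/t dt. -/
/-! Writing `Φ t = ∫₀ᵗ φ` and swapping the order of integration,
`∫₀^∞ Φ t / (t+1)² dt = ∫₀^∞ φ s / (s+1) ds`. Split at `1`: the part over `(0, 1]` is at most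
`Φ 1`, and `φ s / (s+1) ≤ φ s / s` beyond. Conversely `φ s / s - φ s / (s+1) ≤ φ 1 / s²` since `φ`
decreases, and this integrates over `(1, ∞)` to `φ 1`. Hence `C = Φ 1` and `B = φ 1` work. -/

open MeasureTheory Set Filter

def IsCYFPair (Φ φ : ℝ → ℝ) : Prop :=
  (∀ t ∈ Set.Ioi (0:ℝ), 0 < φ t) ∧
  (∀ s ∈ Set.Ioi (0:ℝ), ∀ t ∈ Set.Ioi (0:ℝ), s ≤ t → φ t ≤ φ s) ∧
  (∀ t ∈ Set.Ioi (0:ℝ), ContinuousWithinAt φ (Set.Ici t) t) ∧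
  (∀ x ∈ Set.Ioi (0:ℝ), IntegrableOn φ (Set.Ioc 0 x)) ∧
  (∀ x ∈ Set.Ici (0:ℝ), Φ x = ∫ t in Set.Ioc 0 x, φ t) ∧
  Filter.Tendsto Φ Filter.atTop Filter.atTop

def YConc : Set (ℝ → ℝ) := {Φ | ∃ φ, IsCYFPair Φ φ}

def Aset : Set (ℝ → ℝ) :=
  {Φ | ∃ φ, IsCYFPair Φ φ ∧ MeasureTheory.IntegrableOn (fun t => φ t / t) (Set.Ioi 1)}

noncomputable def dY (Φ Ψ : ℝ → ℝ) : ℝ :=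
  Real.sqrt (∫ x in Set.Ioi (0:ℝ), (Φ x - Ψ x)^2 / (x+1)^4)

def Yb (b : ℝ) : Set (ℝ → ℝ) := {Φ | Φ ∈ YConc ∧ Φ b = b}
def AbS (b : ℝ) : Set (ℝ → ℝ) := {Φ | Φ ∈ Aset ∧ Φ b = b}

open Topology
open scoped ENNReal

lemma lintegral_Ioi_one_div_add_sq {a c : ℝ} (hac : 0 < a + c) :
    ∫⁻ t in Ioi a, ENNReal.ofReal (1 / (t + c) ^ 2) = ENNReal.ofReal (1 / (a + c)) := by
  have hderiv : ∀ x ∈ Ici a, HasDerivAt (fun y : ℝ => -(y + c)⁻¹) (1 / (x + c) ^ 2) x := by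
    intro x hx
    have hx0 : x + c ≠ 0 := by linarith [mem_Ici.1 hx]
    rw [show 1 / (x + c) ^ 2 = -(-1 / (id x + c) ^ 2) by simp [neg_div]]
    exact (((hasDerivAt_id x).add_const c).inv hx0).neg
  have hnonneg : ∀ x ∈ Ioi a, 0 ≤ 1 / (x + c) ^ 2 := fun x _ => by positivity
  have htend : Tendsto (fun y : ℝ => -(y + c)⁻¹) atTop (𝓝 0) := by
    simpa using (tendsto_inv_atTop_zero.comp (tendsto_atTop_add_const_right _ c tendsto_id)).neg
  rw [← ofReal_integral_eq_lintegral_ofReal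
      (integrableOn_Ioi_deriv_of_nonneg' hderiv hnonneg htend) (ae_of_all _ fun x => by positivity),
    integral_Ioi_of_hasDerivAt_of_nonneg' hderiv hnonneg htend]
  simp [one_div]

lemma div_le_div_add_one_add_div_sq {a b s : ℝ} (ha : 0 ≤ a) (hab : a ≤ b) (hs : 0 < s) :
    a / s ≤ a / (s + 1) + b / s ^ 2 := by
  rw [div_add_div _ _ (by positivity) (by positivity), div_le_div_iff₀ hs (by positivity)]
  nlinarith [mul_nonneg ha hs.le, mul_le_mul_of_nonneg_right hab (by positivity : 0 ≤ (s + 1) * s)]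

/-- Tonelli's theorem for the triangle `{s ≤ t}`. -/
theorem lintegral_lintegral_Iic_mul_eq (μ ν : Measure ℝ) [SFinite μ] [SFinite ν]
    {f g : ℝ → ℝ≥0∞} (hf : AEMeasurable f μ) (hg : AEMeasurable g ν) :
    ∫⁻ t, (∫⁻ s in Iic t, f s ∂μ) * g t ∂ν = ∫⁻ s, f s * ∫⁻ t in Ici s, g t ∂ν ∂μ := by
  set F : ℝ → ℝ → ℝ≥0∞ := fun t s =>
    {p : ℝ × ℝ | p.2 ≤ p.1}.indicator (fun p => f p.2 * g p.1) (t, s)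
  have hF : AEMeasurable (Function.uncurry F) (ν.prod μ) :=
    (hf.comp_snd.mul hg.comp_fst).indicator (measurableSet_le measurable_snd measurable_fst)
  calc ∫⁻ t, (∫⁻ s in Iic t, f s ∂μ) * g t ∂ν = ∫⁻ t, ∫⁻ s, F t s ∂μ ∂ν := by
        refine lintegral_congr fun t => ?_
        rw [← lintegral_mul_const'' _ hf.restrict, ← lintegral_indicator measurableSet_Iic]
        rfl
    _ = ∫⁻ s, ∫⁻ t, F t s ∂ν ∂μ := lintegral_lintegral_swap hF
    _ = ∫⁻ s, f s * ∫⁻ t in Ici s, g t ∂ν ∂μ := by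
        refine lintegral_congr fun s => ?_
        rw [← lintegral_const_mul'' _ hg.restrict, ← lintegral_indicator measurableSet_Ici]
        rfl

namespace IsCYFPair

variable {Φ φ : ℝ → ℝ} (h : IsCYFPair Φ φ)
include h

lemma antitoneOn : AntitoneOn φ (Ioi 0) := h.2.1

lemma density_pos {t : ℝ} (ht : 0 < t) : 0 < φ t := h.1 t ht

lemma integrableOn_Ioc {x : ℝ} (hx : 0 < x) : IntegrableOn φ (Ioc 0 x) := h.2.2.2.1 x hx

lemma eq_integral {x : ℝ} (hx : 0 ≤ x) : Φ x = ∫ t in Ioc 0 x, φ t := h.2.2.2.2.1 x hx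

lemma aemeasurable : AEMeasurable φ (volume.restrict (Ioi 0)) :=
  aemeasurable_restrict_of_antitoneOn measurableSet_Ioi h.antitoneOn

lemma ofReal_eq_lintegral {x : ℝ} (hx : 0 < x) :
    ENNReal.ofReal (Φ x) = ∫⁻ s in Ioc 0 x, ENNReal.ofReal (φ s) := by
  rw [h.eq_integral hx.le]
  exact ofReal_integral_eq_lintegral_ofReal (h.integrableOn_Ioc hx)
    ((ae_restrict_iff' measurableSet_Ioc).2 (ae_of_all _ fun s hs => (h.density_pos hs.1).le))

lemma mul_density_le {x : ℝ} (hx : 0 < x) : x * φ x ≤ Φ x := by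
  rw [h.eq_integral hx.le]
  calc x * φ x = ∫ _ in Ioc 0 x, φ x := by simp [hx.le]
    _ ≤ ∫ s in Ioc 0 x, φ s :=
        setIntegral_mono_on (integrableOn_const (by simp) (by simp)) (h.integrableOn_Ioc hx)
          measurableSet_Ioc fun s hs => h.antitoneOn hs.1 hx hs.2

lemma pos {x : ℝ} (hx : 0 < x) : 0 < Φ x :=
  (mul_pos hx (h.density_pos hx)).trans_le (h.mul_density_le hx)

lemma lintegral_div_add_one_sq :
    ∫⁻ t in Ioi 0, ENNReal.ofReal (Φ t / (t + 1) ^ 2) =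
      ∫⁻ s in Ioi 0, ENNReal.ofReal (φ s / (s + 1)) := by
  have hg : AEMeasurable (fun t : ℝ => ENNReal.ofReal (1 / (t + 1) ^ 2))
      (volume.restrict (Ioi 0)) := by fun_prop
  convert lintegral_lintegral_Iic_mul_eq _ _ h.aemeasurable.ennreal_ofReal hg using 1
  · refine setLIntegral_congr_fun measurableSet_Ioi fun t (ht : 0 < t) => ?_
    rw [Measure.restrict_restrict measurableSet_Iic, Iic_inter_Ioi, ← h.ofReal_eq_lintegral ht,
      ← ENNReal.ofReal_mul (h.pos ht).le, ← div_eq_mul_one_div]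
  · refine setLIntegral_congr_fun measurableSet_Ioi fun s (hs : 0 < s) => ?_
    rw [Measure.restrict_restrict measurableSet_Ici,
      inter_eq_left.2 (Ici_subset_Ioi.2 hs), ← restrict_Ioi_eq_restrict_Ici,
      lintegral_Ioi_one_div_add_sq (by linarith), ← ENNReal.ofReal_mul (h.density_pos hs).le,
      ← div_eq_mul_one_div]

lemma lintegral_div_add_one_le :
    ∫⁻ s in Ioi 0, ENNReal.ofReal (φ s / (s + 1)) ≤
      ENNReal.ofReal (Φ 1) + ∫⁻ s in Ioi 1, ENNReal.ofReal (φ s / s) := by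
  rw [← Ioc_union_Ioi_eq_Ioi zero_le_one,
    lintegral_union measurableSet_Ioi (Ioc_disjoint_Ioi le_rfl), h.ofReal_eq_lintegral one_pos]
  refine add_le_add (setLIntegral_mono' measurableSet_Ioc fun s hs => ?_)
    (setLIntegral_mono' measurableSet_Ioi fun s (hs : 1 < s) => ?_) <;> gcongr
  · exact div_le_self (h.density_pos hs.1).le (by linarith [hs.1])
  · exact (h.density_pos (zero_lt_one.trans hs)).le
  · linarith

lemma lintegral_div_le :
    ∫⁻ s in Ioi 1, ENNReal.ofReal (φ s / s) ≤
      (∫⁻ s in Ioi 0, ENNReal.ofReal (φ s / (s + 1))) + ENNReal.ofReal (φ 1) := by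
  have hsq : ∫⁻ s in Ioi 1, ENNReal.ofReal (φ 1 / s ^ 2) = ENNReal.ofReal (φ 1) := by
    simp_rw [div_eq_mul_one_div (φ 1), ENNReal.ofReal_mul (h.density_pos one_pos).le]
    rw [lintegral_const_mul' _ _ ENNReal.ofReal_ne_top,
      show ∫⁻ s in Ioi (1 : ℝ), ENNReal.ofReal (1 / s ^ 2) = 1 by
        simpa using lintegral_Ioi_one_div_add_sq (a := 1) (c := 0) (by norm_num), mul_one]
  calc ∫⁻ s in Ioi 1, ENNReal.ofReal (φ s / s)
      ≤ ∫⁻ s in Ioi 1, (ENNReal.ofReal (φ s / (s + 1)) + ENNReal.ofReal (φ 1 / s ^ 2)) := by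
        refine setLIntegral_mono' measurableSet_Ioi fun s (hs : 1 < s) => ?_
        have hs0 : 0 < s := zero_lt_one.trans hs
        refine (ENNReal.ofReal_le_ofReal ?_).trans ENNReal.ofReal_add_le
        exact div_le_div_add_one_add_div_sq (h.density_pos hs0).le
          (h.antitoneOn (mem_Ioi.2 one_pos) hs0 hs.le) hs0
    _ = (∫⁻ s in Ioi 1, ENNReal.ofReal (φ s / (s + 1))) + ENNReal.ofReal (φ 1) := by
        rw [lintegral_add_right _ (by fun_prop), hsq]
    _ ≤ (∫⁻ s in Ioi 0, ENNReal.ofReal (φ s / (s + 1))) + ENNReal.ofReal (φ 1) := by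
        gcongr
        exact zero_le_one

end IsCYFPair

theorem stmt_1 (Φ φ : ℝ → ℝ) (h : IsCYFPair Φ φ) :
    ∃ C B : ℝ, 0 < C ∧ 0 ≤ B ∧
      (∫⁻ t in Set.Ioi (1:ℝ), ENNReal.ofReal (φ t / t)) - ENNReal.ofReal B ≤
        ∫⁻ t in Set.Ioi (0:ℝ), ENNReal.ofReal (Φ t / (t+1)^2) ∧
      (∫⁻ t in Set.Ioi (0:ℝ), ENNReal.ofReal (Φ t / (t+1)^2)) ≤
        ENNReal.ofReal C + ∫⁻ t in Set.Ioi (1:ℝ), ENNReal.ofReal (φ t / t) := by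
  refine ⟨Φ 1, φ 1, h.pos one_pos, (h.density_pos one_pos).le, ?_, ?_⟩
  · rw [tsub_le_iff_right, h.lintegral_div_add_one_sq]
    exact h.lintegral_div_le
  · rw [h.lintegral_div_add_one_sq]
    exact h.lintegral_div_add_one_le
end

section
/- For every b ∈ (0,∞), the set 𝒜_b = {Φ ∈ 𝒜 : Φ(b) = b} is dense in 𝒴_b = {Φ ∈ 𝒴_conc : Φ(b) = b} with respect to the semi-metric d(Φ,Ψ) = (∫₀^∞ (Φ−Ψ)²/(x+1)⁴ dx)^{1/2}: for every Ψ ∈ 𝒴_b there is a sequence (Ψ_n) ⊂ 𝒜_b with d(Ψ, Ψ_n) → 0. One may take Ψ_n(x) = b·Φ(x)^{1−1/(n+1)}/Φ(b)^{1−1/(n+1)} where Ψ = bΦ/Φ(b). -/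
/-!
Cut the density `φ` of `Ψ` off at a point `c ≥ b` and continue it by `φ c * √(c / t)`.
The resulting primitive `Φ_c` is again a concave Young function, agrees with `Ψ` on `[0, c]`
(so `Φ_c b = b`), and lies in `𝒜` because its density decays like `t ^ (-1/2)`.
Every `Φ ∈ 𝒴_b` satisfies `0 ≤ Φ x ≤ x + b`, so `|Ψ - Φ_c| ≤ x + b`, which is
square-integrable against `(x + 1)⁻⁴`; since `Φ_c = Ψ` on `[0, c]`, dominated convergence
gives `d(Ψ, Φ_c) → 0` as `c → ∞`.
-/

open MeasureTheory Set Filter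

open Topology

noncomputable def sqrtTailDensity (φ : ℝ → ℝ) (c t : ℝ) : ℝ :=
  if t ≤ c then φ t else φ c * √(c / t)

noncomputable def sqrtTailPrimitive (φ : ℝ → ℝ) (c x : ℝ) : ℝ :=
  ∫ t in Ioc 0 x, sqrtTailDensity φ c t

section SqrtTail

variable {φ : ℝ → ℝ} {c t : ℝ}

theorem sqrtTailDensity_of_le (ht : t ≤ c) : sqrtTailDensity φ c t = φ t := if_pos ht

theorem sqrtTailDensity_of_ge (hc : 0 < c) (ht : c ≤ t) :
    sqrtTailDensity φ c t = φ c * √(c / t) := by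
  rcases ht.eq_or_lt with rfl | ht
  · simp [sqrtTailDensity, hc.ne']
  · exact if_neg ht.not_ge

theorem continuousAt_mul_sqrt_div (a c : ℝ) (ht : t ≠ 0) :
    ContinuousAt (fun s => a * √(c / s)) t :=
  continuousAt_const.mul (continuousAt_const.div continuousAt_id ht).sqrt

end SqrtTail

namespace IsCYFPair

variable {Φ φ : ℝ → ℝ} {a b c x : ℝ}

theorem integrableOn_Ioc_s15 (h : IsCYFPair Φ φ) (ha : 0 ≤ a) : IntegrableOn φ (Ioc a x) := by
  rcases le_or_gt x 0 with hx | hx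
  · simp [Ioc_eq_empty_of_le (hx.trans ha)]
  · exact (h.2.2.2.1 x hx).mono_set (Ioc_subset_Ioc ha le_rfl)

theorem monotone_primitive (h : IsCYFPair Φ φ) : Monotone fun x => ∫ t in Ioc 0 x, φ t :=
  fun _ y hxy => setIntegral_mono_set (h.integrableOn_Ioc_s15 (x := y) le_rfl)
    (ae_restrict_of_forall_mem measurableSet_Ioc fun t ht => (h.1 t ht.1).le)
    (Ioc_subset_Ioc le_rfl hxy).eventuallyLE

theorem aestronglyMeasurable (h : IsCYFPair Φ φ) :
    AEStronglyMeasurable Φ (volume.restrict (Ioi 0)) :=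
  h.monotone_primitive.measurable.aestronglyMeasurable.congr <|
    ae_restrict_of_forall_mem measurableSet_Ioi fun x (hx : 0 < x) => (h.2.2.2.2.1 x hx.le).symm

theorem nonneg (h : IsCYFPair Φ φ) (hx : 0 ≤ x) : 0 ≤ Φ x := by
  rw [h.2.2.2.2.1 x hx]
  exact setIntegral_nonneg measurableSet_Ioc fun t ht => (h.1 t ht.1).le

theorem add_setIntegral_Ioc (h : IsCYFPair Φ φ) (ha : 0 ≤ a) (hax : a ≤ x) :
    Φ a + ∫ t in Ioc a x, φ t = Φ x := by
  rw [h.2.2.2.2.1 a ha, h.2.2.2.2.1 x (ha.trans hax), ← setIntegral_union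
    (Ioc_disjoint_Ioc_of_le le_rfl) measurableSet_Ioc (h.integrableOn_Ioc_s15 le_rfl)
    (h.integrableOn_Ioc_s15 ha), Ioc_union_Ioc_eq_Ioc ha hax]

theorem density_le_one (h : IsCYFPair Φ φ) (hb : 0 < b) (hΦb : Φ b = b) : φ b ≤ 1 := by
  have := setIntegral_ge_of_const_le_real (μ := volume) measurableSet_Ioc
    measure_Ioc_lt_top.ne (fun t ht => h.2.1 t ht.1 b hb ht.2) (h.integrableOn_Ioc_s15 le_rfl)
  rw [Real.volume_real_Ioc_of_le hb.le, sub_zero, ← h.2.2.2.2.1 b hb.le, hΦb] at this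
  nlinarith

theorem le_add_of_apply_eq (h : IsCYFPair Φ φ) (hb : 0 < b) (hΦb : Φ b = b) (hx : 0 ≤ x) :
    Φ x ≤ x + b := by
  rcases le_total x b with hxb | hbx
  · have := h.monotone_primitive hxb
    simp only [← h.2.2.2.2.1 x hx, ← h.2.2.2.2.1 b hb.le] at this
    linarith
  · have hint : ∫ t in Ioc b x, φ t ≤ (x - b) * φ b :=
      calc ∫ t in Ioc b x, φ t ≤ ∫ t in Ioc b x, φ b :=
            setIntegral_mono_on (h.integrableOn_Ioc_s15 hb.le)
              (integrableOn_const measure_Ioc_lt_top.ne) measurableSet_Ioc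
              fun t ht => h.2.1 b hb t (hb.trans ht.1) ht.1.le
        _ = (x - b) * φ b := by
            rw [setIntegral_const, Real.volume_real_Ioc_of_le hbx, smul_eq_mul]
    have := h.density_le_one hb hΦb
    rw [← h.add_setIntegral_Ioc hb.le hbx, hΦb]
    nlinarith [sub_nonneg.2 hbx]

variable {s t : ℝ}

theorem sqrtTailDensity_pos (h : IsCYFPair Φ φ) (hc : 0 < c) (ht : 0 < t) :
    0 < sqrtTailDensity φ c t := by
  rcases le_total t c with htc | hct
  · rw [sqrtTailDensity_of_le htc]
    exact h.1 t ht
  · rw [sqrtTailDensity_of_ge hc hct]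
    exact mul_pos (h.1 c hc) (Real.sqrt_pos.2 (div_pos hc ht))

theorem sqrtTailDensity_anti (h : IsCYFPair Φ φ) (hc : 0 < c) (hs : 0 < s) (hst : s ≤ t) :
    sqrtTailDensity φ c t ≤ sqrtTailDensity φ c s := by
  have hφc := (h.1 c hc).le
  rcases le_total t c with htc | hct
  · rw [sqrtTailDensity_of_le htc, sqrtTailDensity_of_le (hst.trans htc)]
    exact h.2.1 s hs t (hs.trans_le hst) hst
  rw [sqrtTailDensity_of_ge hc hct]
  rcases le_total s c with hsc | hcs
  · rw [sqrtTailDensity_of_le hsc]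
    calc φ c * √(c / t) ≤ φ c * 1 := by
          gcongr
          exact Real.sqrt_le_one.2 (div_le_one_of_le₀ hct (hc.le.trans hct))
      _ ≤ φ s := by rw [mul_one]; exact h.2.1 s hs c hc hsc
  · rw [sqrtTailDensity_of_ge hc hcs]
    gcongr

theorem continuousWithinAt_sqrtTailDensity (h : IsCYFPair Φ φ) (hc : 0 < c) (ht : 0 < t) :
    ContinuousWithinAt (sqrtTailDensity φ c) (Ici t) t := by
  rcases lt_or_ge t c with htc | hct
  · refine (h.2.2.1 t ht).congr_of_eventuallyEq ?_ (sqrtTailDensity_of_le htc.le)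
    filter_upwards [nhdsWithin_le_nhds (Iio_mem_nhds htc)] with u hu
    exact sqrtTailDensity_of_le (le_of_lt hu)
  · exact (continuousAt_mul_sqrt_div (φ c) c ht.ne').continuousWithinAt.congr
      (fun u hu => sqrtTailDensity_of_ge hc (hct.trans hu)) (sqrtTailDensity_of_ge hc hct)

theorem integrableOn_sqrtTailDensity (h : IsCYFPair Φ φ) (hc : 0 < c) (x : ℝ) :
    IntegrableOn (sqrtTailDensity φ c) (Ioc 0 x) := by
  refine IntegrableOn.mono_set (IntegrableOn.union ?_ ?_) (Ioc_subset_Ioc_union_Ioc (b := c))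
  · exact (h.integrableOn_Ioc_s15 le_rfl).congr_fun
      (fun t ht => (sqrtTailDensity_of_le ht.2).symm) measurableSet_Ioc
  · have : ContinuousOn (fun t => φ c * √(c / t)) (Icc c x) := fun t ht =>
      (continuousAt_mul_sqrt_div _ _ (hc.trans_le ht.1).ne').continuousWithinAt
    exact (this.integrableOn_Icc.mono_set Ioc_subset_Icc_self).congr_fun
      (fun t ht => (sqrtTailDensity_of_ge hc ht.1.le).symm) measurableSet_Ioc

theorem tendsto_sqrtTailPrimitive (h : IsCYFPair Φ φ) (hc : 0 < c) :
    Tendsto (sqrtTailPrimitive φ c) atTop atTop := by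
  have hK : 0 < φ c * √c := mul_pos (h.1 c hc) (Real.sqrt_pos.2 hc)
  have key : ∀ x, 2 * c ≤ x → φ c * √c * (√x / 2) ≤ sqrtTailPrimitive φ c x := by
    intro x hx
    have hx0 : 0 < x := by linarith
    have hcx : c ≤ x := by linarith
    have hlow := setIntegral_ge_of_const_le_real (μ := volume) measurableSet_Ioc
      measure_Ioc_lt_top.ne (fun t ht => h.sqrtTailDensity_anti hc (hc.trans ht.1) ht.2)
      ((h.integrableOn_sqrtTailDensity hc x).mono_set (Ioc_subset_Ioc hc.le le_rfl))
    rw [Real.volume_real_Ioc_of_le hcx, sqrtTailDensity_of_ge hc hcx] at hlow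
    have hsub : ∫ t in Ioc c x, sqrtTailDensity φ c t ≤ sqrtTailPrimitive φ c x :=
      setIntegral_mono_set (h.integrableOn_sqrtTailDensity hc x)
        (ae_restrict_of_forall_mem measurableSet_Ioc fun t ht =>
          (h.sqrtTailDensity_pos hc ht.1).le)
        (Ioc_subset_Ioc hc.le le_rfl).eventuallyLE
    have hsx : 0 < √x := Real.sqrt_pos.2 hx0
    have halg : √x / 2 ≤ (x - c) / √x := by
      rw [le_div_iff₀ hsx]
      nlinarith [Real.sq_sqrt hx0.le]
    calc φ c * √c * (√x / 2) ≤ φ c * √c * ((x - c) / √x) := by gcongr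
      _ = φ c * √(c / x) * (x - c) := by rw [Real.sqrt_div hc.le]; ring
      _ ≤ sqrtTailPrimitive φ c x := hlow.trans hsub
  exact tendsto_atTop_mono' _ ((eventually_ge_atTop _).mono key)
    ((Real.tendsto_sqrt_atTop.atTop_div_const two_pos).const_mul_atTop hK)

theorem sqrtTail (h : IsCYFPair Φ φ) (hc : 0 < c) :
    IsCYFPair (sqrtTailPrimitive φ c) (sqrtTailDensity φ c) :=
  ⟨fun _ ht => h.sqrtTailDensity_pos hc ht,
    fun _ hs _ _ hst => h.sqrtTailDensity_anti hc hs hst,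
    fun _ ht => h.continuousWithinAt_sqrtTailDensity hc ht,
    fun x _ => h.integrableOn_sqrtTailDensity hc x,
    fun _ _ => rfl,
    h.tendsto_sqrtTailPrimitive hc⟩

theorem sqrtTailPrimitive_eq (h : IsCYFPair Φ φ) (hx : 0 ≤ x) (hxc : x ≤ c) :
    sqrtTailPrimitive φ c x = Φ x := by
  rw [h.2.2.2.2.1 x hx]
  exact setIntegral_congr_fun measurableSet_Ioc fun t ht => sqrtTailDensity_of_le (ht.2.trans hxc)

theorem integrableOn_sqrtTailDensity_div (h : IsCYFPair Φ φ) (hc : 0 < c) :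
    IntegrableOn (fun t => sqrtTailDensity φ c t / t) (Ioi 1) := by
  refine IntegrableOn.mono_set (IntegrableOn.union ?_ ?_) (Ioi_subset_Ioc_union_Ioi (b := c))
  · have hφ : IntegrableOn φ (Icc 1 c) :=
      (integrableOn_Icc_iff_integrableOn_Ioc).2 (h.integrableOn_Ioc_s15 zero_le_one)
    have : IntegrableOn (fun t => φ t * t⁻¹) (Icc 1 c) :=
      hφ.mul_continuousOn (continuousOn_inv₀.mono fun t ht => (zero_lt_one.trans_le ht.1).ne')
        isCompact_Icc
    exact (this.mono_set Ioc_subset_Icc_self).congr_fun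
      (fun t ht => by rw [sqrtTailDensity_of_le ht.2, div_eq_mul_inv]) measurableSet_Ioc
  · refine IntegrableOn.congr_fun ((integrableOn_Ioi_rpow_of_lt
      (by norm_num : (-(3 / 2) : ℝ) < -1) hc).const_mul (φ c * √c))
      (fun t ht => ?_) measurableSet_Ioi
    have ht0 : 0 < t := hc.trans ht
    rw [sqrtTailDensity_of_ge hc (le_of_lt ht), Real.sqrt_div hc.le, Real.sqrt_eq_rpow t,
      show (-(3 / 2) : ℝ) = -(1 / 2) + -1 by norm_num, Real.rpow_add ht0, Real.rpow_neg ht0.le,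
      Real.rpow_neg ht0.le, Real.rpow_one]
    field_simp

end IsCYFPair

theorem integrableOn_add_sq_div_pow_four (b : ℝ) :
    IntegrableOn (fun x : ℝ => (x + b) ^ 2 / (x + 1) ^ 4) (Ioi 0) := by
  refine ((integrable_inv_one_add_sq.const_mul (2 + 2 * b ^ 2)).integrableOn).mono'
    (by fun_prop : Measurable fun x : ℝ => (x + b) ^ 2 / (x + 1) ^ 4).aestronglyMeasurable ?_
  filter_upwards [ae_restrict_mem measurableSet_Ioi] with x (hx : 0 < x)
  rw [Real.norm_eq_abs, abs_of_nonneg (by positivity), ← div_eq_mul_inv,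
    div_le_div_iff₀ (by positivity) (by positivity)]
  calc (x + b) ^ 2 * (1 + x ^ 2) ≤ (2 + 2 * b ^ 2) * (1 + x ^ 2) * (1 + x ^ 2) := by
        gcongr
        nlinarith [sq_nonneg (x - b), sq_nonneg (x * b)]
    _ ≤ (2 + 2 * b ^ 2) * (x + 1) ^ 4 := by
        rw [mul_assoc]
        gcongr
        nlinarith [sq_nonneg x]

theorem tendsto_dY_of_dominated {Ψ B : ℝ → ℝ} {Ψn : ℕ → ℝ → ℝ}
    (hmeas : ∀ n, AEStronglyMeasurable (fun x => Ψ x - Ψn n x) (volume.restrict (Ioi 0)))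
    (hB : IntegrableOn (fun x => B x ^ 2 / (x + 1) ^ 4) (Ioi 0))
    (hbound : ∀ n, ∀ x ∈ Ioi (0 : ℝ), |Ψ x - Ψn n x| ≤ B x)
    (hlim : ∀ x ∈ Ioi (0 : ℝ), Tendsto (fun n => Ψn n x) atTop (𝓝 (Ψ x))) :
    Tendsto (fun n => dY Ψ (Ψn n)) atTop (𝓝 0) := by
  have hint : Tendsto (fun n => ∫ x in Ioi 0, (Ψ x - Ψn n x) ^ 2 / (x + 1) ^ 4) atTop
      (𝓝 (∫ _ in Ioi (0 : ℝ), (0 : ℝ))) := by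
    have hden : Measurable fun x : ℝ => (x + 1) ^ 4 := by fun_prop
    refine tendsto_integral_of_dominated_convergence _
      (fun n => (((hmeas n).aemeasurable.pow_const 2).div hden.aemeasurable).aestronglyMeasurable)
      hB (fun n => ?_) ?_
    · filter_upwards [ae_restrict_mem measurableSet_Ioi] with x hx
      rw [Real.norm_eq_abs, abs_of_nonneg (by positivity)]
      exact div_le_div_of_nonneg_right (sq_le_sq.2 ((hbound n x hx).trans (le_abs_self _)))
        (by positivity)
    · filter_upwards [ae_restrict_mem measurableSet_Ioi] with x hx
      simpa using (((tendsto_const_nhds (x := Ψ x)).sub (hlim x hx)).pow 2).div_const ((x + 1) ^ 4)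
  simpa [dY] using hint.sqrt

theorem stmt_15 (b : ℝ) (hb : 0 < b) :
    ∀ Ψ ∈ Yb b, ∃ Ψn : ℕ → (ℝ → ℝ),
      (∀ n, Ψn n ∈ AbS b) ∧
      Filter.Tendsto (fun n => dY Ψ (Ψn n)) Filter.atTop (nhds 0) := by
  rintro Ψ ⟨⟨φ, hΨ⟩, hΨb⟩
  have hc (n : ℕ) : 0 < b + n := by positivity
  have hfix (n : ℕ) : sqrtTailPrimitive φ (b + n) b = b :=
    (hΨ.sqrtTailPrimitive_eq hb.le (by simp)).trans hΨb
  refine ⟨fun n => sqrtTailPrimitive φ (b + n), fun n =>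
    ⟨⟨_, hΨ.sqrtTail (hc n), hΨ.integrableOn_sqrtTailDensity_div (hc n)⟩, hfix n⟩, ?_⟩
  refine tendsto_dY_of_dominated (B := fun x => x + b)
    (fun n => hΨ.aestronglyMeasurable.sub (hΨ.sqrtTail (hc n)).aestronglyMeasurable)
    (integrableOn_add_sq_div_pow_four b) (fun n x (hx : 0 < x) => ?_) (fun x (hx : 0 < x) => ?_)
  · have hn := hΨ.sqrtTail (hc n)
    exact abs_sub_le_iff.2
      ⟨by linarith [hΨ.le_add_of_apply_eq hb hΨb hx.le, hn.nonneg hx.le],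
        by linarith [hn.le_add_of_apply_eq hb (hfix n) hx.le, hΨ.nonneg hx.le]⟩
  · refine tendsto_const_nhds.congr' ?_
    filter_upwards [eventually_ge_atTop ⌈x⌉₊] with n hn
    refine (hΨ.sqrtTailPrimitive_eq hx.le ?_).symm
    have : (⌈x⌉₊ : ℝ) ≤ n := by exact_mod_cast hn
    linarith [Nat.le_ceil x]
end
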